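/- arXiv:1802.01260 — 2 statements merged into one kernel-verified Lean document; each statement's English description precedes it below -/
import Mathlib

section
/- Let n be a positive odd integer. Then ∑_{k=1}^{n-1} q^k / [2k]^2 ≡ (n^2-1)(1-q)^2 / 24 (mod Φ_n(q)), i.e., the reduced numerator of the difference of these two rational functions is divisible by Φ_n(q) and the reduced denominator is coprime to Φ_n(q). -/
open Polynomial Finset

noncomputable def q : RatFunc ℚ := RatFunc.X

/-- `qpoch a b m = (a;b)_m = ∏_{j=0}^{m-1} (1 - a b^j)`. -/
noncomputable def qpoch (a b : RatFunc ℚ) (m : ℕ) : RatFunc ℚ :=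
  ∏ j ∈ Finset.range m, (1 - a * b ^ j)

/-- The q-integer `[m] = (1-q^m)/(1-q)` for any integer `m`. -/
noncomputable def qint (m : ℤ) : RatFunc ℚ := (1 - q ^ m) / (1 - q)

/-- Gaussian binomial coefficient in base `b`. -/
noncomputable def qbin (b : RatFunc ℚ) (M N : ℕ) : RatFunc ℚ :=
  if N ≤ M then qpoch b b M / (qpoch b b N * qpoch b b (M - N)) else 0

/-- `C2 a = a(a-1)/2`. -/
def C2 (a : ℤ) : ℤ := a * (a - 1) / 2

/-- The polynomial `[n] = 1 + q + ... + q^{n-1}` in `ℚ[q]`. -/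
noncomputable def qnPoly (n : ℕ) : Polynomial ℚ := ∑ i ∈ Finset.range n, X ^ i

/-- Congruence of rational functions modulo a polynomial: the reduced numerator of the
difference is divisible by `P` and the reduced denominator is coprime to `P`. -/
def congrMod (x y : RatFunc ℚ) (P : Polynomial ℚ) : Prop :=
  P ∣ (x - y).num ∧ IsCoprime ((x - y).denom) P

/-!
Both sides are regular at a primitive `n`-th root of unity `ζ`, and `Φₙ` is the minimal
polynomial of `ζ` over `ℚ`, so the congruence amounts to the equality of the values at `ζ`:
`∑_{k=1}^{n-1} ζ^k / (1 - ζ^{2k})^2 = (n^2 - 1) / 24`. For `x = ζ^k` one has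
`1 / (1 - x) = -(1/n) ∑_j j x^j` and, `n` being odd, `1 / (1 + x) = (1/2) ∑_j (-x)^j`;
the partial fractions `4x / (1 - x^2)^2 = 1 / (1 - x)^2 - 1 / (1 + x)^2` and the orthogonality
of the characters `k ↦ ζ^{jk}` then reduce the sum to the elementary sums `∑_j j (n - j)`
and `∑_j 1`.
-/

theorem Finset.sum_range_eq_add_sum_Icc {M : Type*} [AddCommMonoid M] {n : ℕ} (hn : 0 < n)
    (f : ℕ → M) : ∑ k ∈ range n, f k = f 0 + ∑ k ∈ Icc 1 (n - 1), f k := by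
  rw [range_eq_Ico, sum_eq_sum_Ico_succ_bot hn, ← Ico_add_one_right_eq_Icc,
    Nat.sub_one_add_one hn.ne']

theorem Nat.dvd_add_iff_eq_sub_mod {n j l : ℕ} (hj : j < n) (hl : l < n) :
    n ∣ j + l ↔ l = (n - j) % n := by
  rcases Nat.eq_zero_or_pos j with rfl | hj0
  · simp only [zero_add, Nat.sub_zero, Nat.mod_self]
    exact ⟨fun h => Nat.eq_zero_of_dvd_of_lt h hl, fun h => h ▸ dvd_zero n⟩
  · rw [Nat.mod_eq_of_lt (by omega)]
    constructor
    · rintro ⟨c, hc⟩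
      rcases c with _ | _ | c
      · omega
      · omega
      · nlinarith
    · intro h
      exact ⟨1, by omega⟩

section CommRing

variable {R : Type*} [CommRing R] {x ζ : R} {n : ℕ}

theorem one_sub_mul_sum_cast_mul_pow_add (x : R) (m : ℕ) :
    (1 - x) * ∑ j ∈ range m, (j : R) * x ^ j + m * x ^ m = ∑ j ∈ range m, x ^ (j + 1) := by
  induction m with
  | zero => simp
  | succ m ih =>
    rw [sum_range_succ, sum_range_succ, ← ih]
    push_cast
    ring

theorem one_add_mul_sum_neg_one_pow_mul_pow_of_pow_eq_one (hn : Odd n) (hx : x ^ n = 1) :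
    (1 + x) * ∑ j ∈ range n, (-1) ^ j * x ^ j = 2 := by
  have := mul_neg_geom_sum (-x) n
  rw [hn.neg_pow, hx, sub_neg_eq_add, sub_neg_eq_add, one_add_one_eq_two] at this
  simpa only [neg_pow x] using this

variable [IsDomain R]

theorem one_sub_mul_sum_cast_mul_pow_of_pow_eq_one (hx : x ^ n = 1) (hx1 : x ≠ 1) :
    (1 - x) * ∑ j ∈ range n, (j : R) * x ^ j = -n := by
  have hgeom : ∑ j ∈ range n, x ^ j = 0 := by
    have := mul_neg_geom_sum x n
    rw [hx, sub_self] at this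
    exact (mul_eq_zero.1 this).resolve_left (sub_ne_zero.2 hx1.symm)
  have := one_sub_mul_sum_cast_mul_pow_add x n
  simp only [pow_succ', ← mul_sum, hgeom, mul_zero, hx, mul_one] at this
  linear_combination this

theorem IsPrimitiveRoot.geom_sum_pow (hζ : IsPrimitiveRoot ζ n) (m : ℕ) :
    ∑ k ∈ range n, (ζ ^ m) ^ k = if n ∣ m then (n : R) else 0 := by
  split_ifs with h
  · simp [(hζ.pow_eq_one_iff_dvd m).2 h]
  · have hm : 1 - ζ ^ m ≠ 0 := sub_ne_zero.2 fun h' => h ((hζ.pow_eq_one_iff_dvd m).1 h'.symm)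
    have := mul_neg_geom_sum (ζ ^ m) n
    rw [pow_right_comm, hζ.pow_eq_one, one_pow, sub_self] at this
    exact (mul_eq_zero.1 this).resolve_left hm

theorem IsPrimitiveRoot.sum_sq_sum_mul_pow (hζ : IsPrimitiveRoot ζ n) (c : ℕ → R) :
    ∑ k ∈ range n, (∑ j ∈ range n, c j * (ζ ^ k) ^ j) ^ 2 =
      n * ∑ j ∈ range n, c j * c ((n - j) % n) := by
  calc ∑ k ∈ range n, (∑ j ∈ range n, c j * (ζ ^ k) ^ j) ^ 2
    _ = ∑ j ∈ range n, ∑ l ∈ range n,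
          c j * c l * ∑ k ∈ range n, (ζ ^ (j + l)) ^ k := by
      simp_rw [sq, sum_mul_sum, mul_sum]
      rw [sum_comm]
      refine sum_congr rfl fun j _ => ?_
      rw [sum_comm]
      refine sum_congr rfl fun l _ => sum_congr rfl fun k _ => ?_
      rw [pow_right_comm ζ (j + l), pow_add]
      ring
    _ = ∑ j ∈ range n, ∑ l ∈ range n, if l = (n - j) % n then n * (c j * c l) else 0 := by
      refine sum_congr rfl fun j hj => sum_congr rfl fun l hl => ?_
      simp only [hζ.geom_sum_pow, Nat.dvd_add_iff_eq_sub_mod (mem_range.1 hj) (mem_range.1 hl)]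
      split_ifs <;> ring
    _ = n * ∑ j ∈ range n, c j * c ((n - j) % n) := by
      rw [mul_sum]
      refine sum_congr rfl fun j hj => ?_
      rw [sum_ite_eq', if_pos (mem_range.2 (Nat.mod_lt _ (Nat.zero_lt_of_lt (mem_range.1 hj))))]

theorem IsPrimitiveRoot.sum_sq_sum_neg_one_pow_mul_pow (hζ : IsPrimitiveRoot ζ n) (hn : Odd n) :
    ∑ k ∈ range n, (∑ j ∈ range n, (-1) ^ j * (ζ ^ k) ^ j) ^ 2 = n * (2 - n) := by
  obtain ⟨m, rfl⟩ : ∃ m, n = m + 1 := ⟨n - 1, by have := hn.pos; omega⟩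
  have hterm :
      ∀ j ∈ range m, (-1 : R) ^ (j + 1) * (-1) ^ ((m + 1 - (j + 1)) % (m + 1)) = -1 := by
    intro j hj
    rw [Nat.mod_eq_of_lt (by omega), ← pow_add, Nat.add_sub_cancel' (by simp at hj; omega),
      hn.neg_one_pow]
  rw [hζ.sum_sq_sum_mul_pow, sum_range_succ', sum_congr rfl hterm, sum_const, card_range,
    Nat.sub_zero, Nat.mod_self, nsmul_eq_mul]
  push_cast
  ring

end CommRing

section Field

variable {K : Type*} [Field K] [CharZero K] {ζ : K} {n : ℕ}

theorem sum_range_cast_id (n : ℕ) :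
    ∑ j ∈ range n, (j : K) = n * (n - 1) / 2 := by
  induction n with
  | zero => simp
  | succ m ih => rw [sum_range_succ, ih]; push_cast; ring

theorem sum_range_cast_sq (n : ℕ) :
    ∑ j ∈ range n, (j : K) ^ 2 = n * (n - 1) * (2 * n - 1) / 6 := by
  induction n with
  | zero => simp
  | succ m ih => rw [sum_range_succ, ih]; push_cast; ring

theorem IsPrimitiveRoot.sum_sq_sum_cast_mul_pow (hζ : IsPrimitiveRoot ζ n) :
    ∑ k ∈ range n, (∑ j ∈ range n, (j : K) * (ζ ^ k) ^ j) ^ 2 =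
      n ^ 2 * (n ^ 2 - 1) / 6 := by
  have hterm : ∀ j ∈ range n, (j : K) * ((n - j) % n : ℕ) = n * j - j ^ 2 := by
    intro j hj
    rcases Nat.eq_zero_or_pos j with rfl | hj0
    · simp
    · have hjn := mem_range.1 hj
      rw [Nat.mod_eq_of_lt (by omega), Nat.cast_sub hjn.le]
      ring
  rw [hζ.sum_sq_sum_mul_pow, sum_congr rfl hterm, sum_sub_distrib, ← mul_sum, sum_range_cast_id,
    sum_range_cast_sq]
  ring

theorem IsPrimitiveRoot.sum_pow_div_one_sub_pow_two_mul_sq (hζ : IsPrimitiveRoot ζ n)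
    (hn : Odd n) :
    ∑ k ∈ Icc 1 (n - 1), ζ ^ k / (1 - ζ ^ (2 * k)) ^ 2 = ((n : K) ^ 2 - 1) / 24 := by
  set W : ℕ → K := fun k => ∑ j ∈ range n, (j : K) * (ζ ^ k) ^ j
  set V : ℕ → K := fun k => ∑ j ∈ range n, (-1) ^ j * (ζ ^ k) ^ j
  have hn0 : (n : K) ≠ 0 := Nat.cast_ne_zero.2 hn.pos.ne'
  have hterm : ∀ k ∈ Icc 1 (n - 1),
      ζ ^ k / (1 - ζ ^ (2 * k)) ^ 2 = W k ^ 2 / (4 * n ^ 2) - V k ^ 2 / 16 := by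
    intro k hk
    obtain ⟨hk1, hkn⟩ := mem_Icc.1 hk
    have hx : (ζ ^ k) ^ n = 1 := by rw [pow_right_comm, hζ.pow_eq_one, one_pow]
    have hW : (1 - ζ ^ k) * W k = -n := one_sub_mul_sum_cast_mul_pow_of_pow_eq_one hx
      (hζ.pow_ne_one_of_pos_of_lt (by omega) (by omega))
    have hV : (1 + ζ ^ k) * V k = 2 := one_add_mul_sum_neg_one_pow_mul_pow_of_pow_eq_one hn hx
    have h1 : 1 - ζ ^ k ≠ 0 := left_ne_zero_of_mul (hW ▸ neg_ne_zero.2 hn0)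
    have h2 : 1 + ζ ^ k ≠ 0 := left_ne_zero_of_mul (hV ▸ two_ne_zero)
    rw [pow_mul', show 1 - (ζ ^ k) ^ 2 = (1 - ζ ^ k) * (1 + ζ ^ k) by ring,
      eq_div_of_mul_eq h1 ((mul_comm _ _).trans hW), eq_div_of_mul_eq h2 ((mul_comm _ _).trans hV)]
    field_simp
    ring
  have hW0 : W 0 = n * (n - 1) / 2 := by simp [W, sum_range_cast_id]
  have hV0 : V 0 = 1 := by simp [V, neg_one_geom_sum, Nat.not_even_iff_odd.2 hn]
  have hsplit := sum_range_eq_add_sum_Icc hn.pos fun k => W k ^ 2 / (4 * n ^ 2) - V k ^ 2 / 16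
  rw [sum_sub_distrib, ← sum_div, ← sum_div, hζ.sum_sq_sum_cast_mul_pow,
    hζ.sum_sq_sum_neg_one_pow_mul_pow hn, hW0, hV0] at hsplit
  rw [sum_congr rfl hterm, eq_sub_of_add_eq' hsplit.symm]
  field_simp
  ring

end Field

namespace RatFunc

variable {K L : Type*} [Field K] [Field L] [Algebra K L]

def HasValueAt (x : RatFunc K) (v α : L) : Prop :=
  ∃ A B : K[X], aeval α B ≠ 0 ∧
    x * algebraMap K[X] (RatFunc K) B = algebraMap K[X] (RatFunc K) A ∧
    aeval α A = v * aeval α B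

variable {x y : RatFunc K} {v w α : L}

theorem hasValueAt_algebraMap (p : K[X]) :
    HasValueAt (algebraMap K[X] (RatFunc K) p) (aeval α p) α :=
  ⟨p, 1, by simp, by simp, by simp⟩

theorem hasValueAt_X : HasValueAt (X : RatFunc K) α α := by
  simpa using hasValueAt_algebraMap (α := α) (Polynomial.X : K[X])

theorem hasValueAt_one : HasValueAt (1 : RatFunc K) (1 : L) α := by
  simpa using hasValueAt_algebraMap (α := α) (1 : K[X])

theorem hasValueAt_natCast (m : ℕ) : HasValueAt (m : RatFunc K) (m : L) α := by
  simpa using hasValueAt_algebraMap (α := α) (m : K[X])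

theorem HasValueAt.add (hx : HasValueAt x v α) (hy : HasValueAt y w α) :
    HasValueAt (x + y) (v + w) α := by
  obtain ⟨A₁, B₁, hB₁, hx, hA₁⟩ := hx
  obtain ⟨A₂, B₂, hB₂, hy, hA₂⟩ := hy
  refine ⟨A₁ * B₂ + A₂ * B₁, B₁ * B₂, by simp [hB₁, hB₂], ?_, ?_⟩
  · simp only [map_add, map_mul, ← hx, ← hy]; ring
  · simp only [map_add, map_mul, hA₁, hA₂]; ring

theorem HasValueAt.neg (hx : HasValueAt x v α) : HasValueAt (-x) (-v) α := by
  obtain ⟨A, B, hB, hx, hA⟩ := hx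
  exact ⟨-A, B, hB, by simp [← hx], by simp [hA]⟩

theorem HasValueAt.sub (hx : HasValueAt x v α) (hy : HasValueAt y w α) :
    HasValueAt (x - y) (v - w) α := by
  simpa only [sub_eq_add_neg] using hx.add hy.neg

theorem HasValueAt.mul (hx : HasValueAt x v α) (hy : HasValueAt y w α) :
    HasValueAt (x * y) (v * w) α := by
  obtain ⟨A₁, B₁, hB₁, hx, hA₁⟩ := hx
  obtain ⟨A₂, B₂, hB₂, hy, hA₂⟩ := hy
  refine ⟨A₁ * A₂, B₁ * B₂, by simp [hB₁, hB₂], ?_, ?_⟩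
  · simp only [map_mul, ← hx, ← hy]; ring
  · simp only [map_mul, hA₁, hA₂]; ring

theorem HasValueAt.inv (hx : HasValueAt x v α) (hv : v ≠ 0) : HasValueAt x⁻¹ v⁻¹ α := by
  obtain ⟨A, B, hB, hx, hA⟩ := hx
  have hx0 : x ≠ 0 := by
    rintro rfl
    rw [zero_mul, eq_comm, map_eq_zero_iff _ (algebraMap_injective K)] at hx
    simp [hx, hv, hB] at hA
  refine ⟨B, A, by simp [hA, hv, hB], ?_, by rw [hA, inv_mul_cancel_left₀ hv]⟩
  rw [← hx, inv_mul_cancel_left₀ hx0]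

theorem HasValueAt.div (hx : HasValueAt x v α) (hy : HasValueAt y w α) (hw : w ≠ 0) :
    HasValueAt (x / y) (v / w) α := by
  simpa only [div_eq_mul_inv] using hx.mul (hy.inv hw)

theorem HasValueAt.pow (hx : HasValueAt x v α) (m : ℕ) : HasValueAt (x ^ m) (v ^ m) α := by
  induction m with
  | zero => simpa using hasValueAt_one
  | succ m ih => simpa only [pow_succ] using ih.mul hx

theorem hasValueAt_sum {ι : Type*} (s : Finset ι) {f : ι → RatFunc K} {g : ι → L}
    (h : ∀ i ∈ s, HasValueAt (f i) (g i) α) :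
    HasValueAt (∑ i ∈ s, f i) (∑ i ∈ s, g i) α := by
  classical
  induction s using Finset.induction_on with
  | empty => simpa using hasValueAt_natCast (K := K) (α := α) 0
  | insert i s hi ih =>
    rw [sum_insert hi, sum_insert hi]
    exact (h i (mem_insert_self i s)).add (ih fun j hj => h j (mem_insert_of_mem hj))

theorem HasValueAt.aeval_num_denom (hx : HasValueAt x v α) :
    aeval α x.denom ≠ 0 ∧ aeval α x.num = v * aeval α x.denom := by
  obtain ⟨A, B, hB, hx, hA⟩ := hx
  have hB0 : B ≠ 0 := by rintro rfl; simp at hB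
  have hcross : x.num * B = A * x.denom :=
    (num_mul_eq_mul_denom_iff hB0).2 (eq_div_of_mul_eq (algebraMap_ne_zero hB0) hx)
  have hdenom : x.denom ∣ B :=
    (isCoprime_num_denom x).symm.dvd_of_dvd_mul_left ⟨A, by rw [hcross, mul_comm]⟩
  refine ⟨fun h => hB (by obtain ⟨c, rfl⟩ := hdenom; simp [h]), mul_right_cancel₀ hB ?_⟩
  have := congrArg (aeval α) hcross
  simp only [map_mul, hA] at this
  rw [this]
  ring

end RatFunc

open RatFunc

theorem congrMod_minpoly_of_hasValueAt {L : Type*} [Field L] [Algebra ℚ L] {x y : RatFunc ℚ}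
    {v α : L} (hα : IsIntegral ℚ α) (hx : HasValueAt x v α) (hy : HasValueAt y v α) :
    congrMod x y (minpoly ℚ α) := by
  obtain ⟨hden, hnum⟩ := (sub_self v ▸ hx.sub hy).aeval_num_denom
  refine ⟨minpoly.dvd ℚ α (by rw [hnum, zero_mul]), ?_⟩
  exact ((minpoly.irreducible hα).coprime_iff_not_dvd.2 fun h => hden (minpoly.dvd_iff.1 h)).symm

section Values

variable {L : Type*} [Field L] [Algebra ℚ L] {α : L}

theorem hasValueAt_q : HasValueAt q α α := hasValueAt_X

theorem hasValueAt_qint (hα : α ≠ 1) (m : ℕ) :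
    HasValueAt (qint m) ((1 - α ^ m) / (1 - α)) α := by
  simpa [qint] using (hasValueAt_one.sub (hasValueAt_q.pow m)).div
    (hasValueAt_one.sub hasValueAt_q) (sub_ne_zero.2 hα.symm)

theorem hasValueAt_q_pow_div_qint_sq (hα : α ≠ 1) {k : ℕ} (hk : α ^ (2 * k) ≠ 1) :
    HasValueAt (q ^ k / qint (2 * (k : ℤ)) ^ 2)
      ((1 - α) ^ 2 * (α ^ k / (1 - α ^ (2 * k)) ^ 2)) α := by
  have := (hasValueAt_q.pow k).div ((hasValueAt_qint hα (2 * k)).pow 2)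
    (pow_ne_zero 2 (div_ne_zero (sub_ne_zero.2 hk.symm) (sub_ne_zero.2 hα.symm)))
  rwa [Nat.cast_mul, Nat.cast_ofNat, div_pow, div_div_eq_mul_div, mul_div_right_comm,
    mul_comm (_ / _)] at this

end Values

theorem q_sum_inverse_squares_general (n : ℕ) (hodd : Odd n) :
    congrMod (∑ k ∈ Finset.Icc 1 (n - 1), q ^ k / qint (2 * (k : ℤ)) ^ 2)
      (((n : RatFunc ℚ) ^ 2 - 1) * (1 - q) ^ 2 / 24) (Polynomial.cyclotomic n ℚ) := by
  obtain ⟨ζ, hζ⟩ : ∃ ζ : ℂ, IsPrimitiveRoot ζ n :=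
    ⟨_, Complex.isPrimitiveRoot_exp n hodd.pos.ne'⟩
  have hζ2 : IsPrimitiveRoot (ζ ^ 2) n := hζ.pow_of_coprime 2 (Nat.coprime_two_left.2 hodd)
  have hterm : ∀ k ∈ Icc 1 (n - 1), HasValueAt (q ^ k / qint (2 * (k : ℤ)) ^ 2)
      ((1 - ζ) ^ 2 * (ζ ^ k / (1 - ζ ^ (2 * k)) ^ 2)) ζ := fun k hk => by
    obtain ⟨hk1, hkn⟩ := mem_Icc.1 hk
    refine hasValueAt_q_pow_div_qint_sq (hζ.ne_one (by omega)) ?_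
    rw [pow_mul]
    exact hζ2.pow_ne_one_of_pos_of_lt (by omega) (by omega)
  have hlhs := hasValueAt_sum _ hterm
  rw [← mul_sum, hζ.sum_pow_div_one_sub_pow_two_mul_sq hodd] at hlhs
  have hrhs : HasValueAt (((n : RatFunc ℚ) ^ 2 - 1) * (1 - q) ^ 2 / 24)
      ((1 - ζ) ^ 2 * (((n : ℂ) ^ 2 - 1) / 24)) ζ := by
    have := (((hasValueAt_natCast n).pow 2).sub hasValueAt_one).mul
      ((hasValueAt_one.sub hasValueAt_q).pow 2) |>.div (hasValueAt_natCast (α := ζ) 24)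
      (by norm_num)
    rwa [Nat.cast_ofNat, Nat.cast_ofNat, mul_comm _ ((1 - ζ) ^ 2),
      mul_div_assoc ((1 - ζ) ^ 2)] at this
  rw [cyclotomic_eq_minpoly_rat hζ hodd.pos]
  exact congrMod_minpoly_of_hasValueAt (hζ.isIntegral hodd.pos).tower_top hlhs hrhs

theorem q_sum_inverse_squares (n : ℕ) (hn : 0 < n) (hodd : Odd n) :
    congrMod (∑ k ∈ Finset.Icc 1 (n - 1), q ^ k / qint (2 * (k : ℤ)) ^ 2)
      (((n : RatFunc ℚ) ^ 2 - 1) * (1 - q) ^ 2 / 24) (Polynomial.cyclotomic n ℚ) :=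
  q_sum_inverse_squares_general n hodd
end

section
/- Define F(n,k) = [3n+2k+1] · (q;q^2)_n (q^{2k+1};q^2)_n^2 · q^{-C(n+1,2)-(2n+1)k} / ((q;q)_n^2 (q^2;q^2)_n) and G(n,k) = -(1+q^{n+2k-1}) · (q;q^2)_n (q^{2k+1};q^2)_{n-1}^2 · q^{-C(n,2)-(2n-1)k} / ((1-q)(q;q)_{n-1}^2 (q^2;q^2)_{n-1}), with the convention that 1/(q^2;q^2)_a = 0 for negative integers a (so G(0,k)=0). Then for all integers n ≥ 0 and k ≥ 1, F(n,k-1) - F(n,k) = G(n+1,k) - G(n,k). -/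
open Polynomial Finset

noncomputable def F14 (n k : ℕ) : RatFunc ℚ :=
  (qint (3 * (n : ℤ) + 2 * k + 1) * qpoch q (q ^ 2) n * qpoch (q ^ (2 * k + 1)) (q ^ 2) n ^ 2 *
      q ^ (-(C2 ((n : ℤ) + 1)) - (2 * (n : ℤ) + 1) * k)) /
    (qpoch q q n ^ 2 * qpoch (q ^ 2) (q ^ 2) n)

noncomputable def G14 (n k : ℕ) : RatFunc ℚ :=
  if n = 0 then 0 else
  -(((1 + q ^ (n + 2 * k - 1)) * qpoch q (q ^ 2) n * qpoch (q ^ (2 * k + 1)) (q ^ 2) (n - 1) ^ 2 *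
      q ^ (-(C2 (n : ℤ)) - (2 * (n : ℤ) - 1) * k)) /
    ((1 - q) * qpoch q q (n - 1) ^ 2 * qpoch (q ^ 2) (q ^ 2) (n - 1)))

/-! With `k = m + 1`, each of `F(n,k-1)`, `F(n,k)`, `G(n+1,k)`, `G(n,k)` is a common
hypergeometric term times a rational function of `q`, `q^n`, `q^m`; only the factor
`(1 - q^{2n+2k-1})^2` appears in a denominator. Clearing it turns the WZ equation into a
polynomial identity in `q`, `q^n`, `q^m`. The convention `G(0,k) = 0` needs no special care:
the rational function attached to `G(n,k)` carries the factor `(1 - q^n)^2`. -/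

lemma q_ne_zero : q ≠ 0 := RatFunc.X_ne_zero

lemma one_sub_q_pow_ne_zero {m : ℕ} (hm : 0 < m) : (1 : RatFunc ℚ) - q ^ m ≠ 0 := by
  have hp : (1 - X ^ m : ℚ[X]) ≠ 0 := by
    intro h
    simpa [coeff_one, hm.ne'] using congrArg (coeff · m) h
  simpa [q, RatFunc.algebraMap_X] using RatFunc.algebraMap_ne_zero hp

lemma qint_natCast (m : ℕ) : qint m = (1 - q ^ m) / (1 - q) := by
  simp only [qint, zpow_natCast]

lemma qpoch_succ (a b : RatFunc ℚ) (n : ℕ) :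
    qpoch a b (n + 1) = qpoch a b n * (1 - a * b ^ n) :=
  prod_range_succ _ _

lemma qpoch_mul_one_sub (a b : RatFunc ℚ) (n : ℕ) :
    qpoch a b n * (1 - a * b ^ n) = (1 - a) * qpoch (a * b) b n := by
  rw [← qpoch_succ, qpoch, prod_range_succ', pow_zero, mul_one, mul_comm]
  exact congrArg _ (prod_congr rfl fun j _ => by ring)

lemma qpoch_q_pow_mul_one_sub (a n : ℕ) :
    qpoch (q ^ a) (q ^ 2) n * (1 - q ^ (a + 2 * n)) =
      (1 - q ^ a) * qpoch (q ^ (a + 2)) (q ^ 2) n := by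
  rw [pow_add, pow_add, pow_mul]
  exact qpoch_mul_one_sub _ _ _

lemma C2_succ (a : ℤ) : C2 (a + 1) = C2 a + a := by
  obtain ⟨c, hc⟩ := Int.even_mul_succ_self (a - 1)
  have h1 : (a + 1) * (a + 1 - 1) = (a - 1) * (a - 1 + 1) + 2 * a := by ring
  have h2 : a * (a - 1) = (a - 1) * (a - 1 + 1) := by ring
  unfold C2
  omega

/-- The hypergeometric term shared by `F(n,k-1)`, `F(n,k)`, `G(n+1,k)` and `G(n,k)`, where
`k = m + 1`. -/
noncomputable def wzFactor (n m : ℕ) : RatFunc ℚ :=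
  qpoch q (q ^ 2) n * qpoch (q ^ (2 * (m + 1) + 1)) (q ^ 2) n ^ 2 *
      q ^ (-C2 ((n : ℤ) + 1) - (2 * (n : ℤ) + 1) * (m + 1)) /
    (qpoch q q n ^ 2 * qpoch (q ^ 2) (q ^ 2) n) / (1 - q)

lemma F14_succ_eq_wzFactor_mul (n m : ℕ) :
    F14 n (m + 1) = wzFactor n m * (1 - q ^ (3 * n + 2 * m + 3)) := by
  have hexp : 3 * (n : ℤ) + 2 * ((m + 1 : ℕ) : ℤ) + 1 = ((3 * n + 2 * m + 3 : ℕ) : ℤ) := by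
    push_cast; ring
  rw [F14, wzFactor, hexp, qint_natCast]
  push_cast
  ring

lemma F14_mul_sq_eq_wzFactor_mul (n m : ℕ) :
    F14 n m * (1 - q ^ (2 * m + 1 + 2 * n)) ^ 2 =
      wzFactor n m *
        ((1 - q ^ (3 * n + 2 * m + 1)) * (1 - q ^ (2 * m + 1)) ^ 2 * q ^ (2 * n + 1)) := by
  have hexp : -C2 ((n : ℤ) + 1) - (2 * n + 1) * m =
      -C2 ((n : ℤ) + 1) - (2 * n + 1) * (m + 1) + ((2 * n + 1 : ℕ) : ℤ) := by
    push_cast; ring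
  have hint : 3 * (n : ℤ) + 2 * (m : ℤ) + 1 = ((3 * n + 2 * m + 1 : ℕ) : ℤ) := by push_cast; ring
  have hshift : qpoch (q ^ (2 * m + 1)) (q ^ 2) n ^ 2 * (1 - q ^ (2 * m + 1 + 2 * n)) ^ 2 =
      (1 - q ^ (2 * m + 1)) ^ 2 * qpoch (q ^ (2 * (m + 1) + 1)) (q ^ 2) n ^ 2 := by
    rw [← mul_pow, ← mul_pow, qpoch_q_pow_mul_one_sub, mul_add_one]
  rw [F14, wzFactor, hexp, hint, qint_natCast, zpow_add₀ q_ne_zero, zpow_natCast]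
  linear_combination (1 - q ^ (3 * n + 2 * m + 1)) / (1 - q) * qpoch q (q ^ 2) n *
      q ^ (-C2 ((n : ℤ) + 1) - (2 * n + 1) * (m + 1)) * q ^ (2 * n + 1) /
      (qpoch q q n ^ 2 * qpoch (q ^ 2) (q ^ 2) n) * hshift

lemma G14_succ_succ_eq_wzFactor_mul (n m : ℕ) :
    G14 (n + 1) (m + 1) =
      -(wzFactor n m * ((1 + q ^ (n + 2 * m + 2)) * (1 - q ^ (2 * n + 1)))) := by
  have hexp : -C2 ((n + 1 : ℕ) : ℤ) - (2 * ((n + 1 : ℕ) : ℤ) - 1) * ((m + 1 : ℕ) : ℤ) =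
      -C2 ((n : ℤ) + 1) - (2 * (n : ℤ) + 1) * (m + 1) := by
    push_cast; ring
  rw [G14, if_neg n.succ_ne_zero, wzFactor, Nat.add_sub_cancel, qpoch_succ q (q ^ 2) n, hexp,
    show n + 1 + 2 * (m + 1) - 1 = n + 2 * m + 2 by omega]
  simp only [div_eq_mul_inv, mul_inv]
  ring

lemma G14_succ_mul_sq_eq_wzFactor_mul (n m : ℕ) :
    G14 n (m + 1) * (1 - q ^ (2 * m + 1 + 2 * n)) ^ 2 =
      -(wzFactor n m * ((1 + q ^ (n + 2 * m + 1)) * (1 - q ^ n) ^ 2 * (1 - q ^ (2 * n)) *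
        q ^ (n + 2 * m + 2))) := by
  rcases n with _ | n
  · simp [G14]
  have hexp : -C2 ((n + 1 : ℕ) : ℤ) - (2 * ((n + 1 : ℕ) : ℤ) - 1) * ((m + 1 : ℕ) : ℤ) =
      -C2 (((n + 1 : ℕ) : ℤ) + 1) - (2 * ((n + 1 : ℕ) : ℤ) + 1) * (m + 1) +
        ((n + 1 + 2 * m + 2 : ℕ) : ℤ) := by
    rw [C2_succ]; push_cast; ring
  have hP : qpoch (q ^ (2 * (m + 1) + 1)) (q ^ 2) (n + 1) =
      qpoch (q ^ (2 * (m + 1) + 1)) (q ^ 2) n * (1 - q ^ (2 * m + 1 + 2 * (n + 1))) := by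
    rw [qpoch_succ]; ring
  have hC : qpoch q q (n + 1) = qpoch q q n * (1 - q ^ (n + 1)) := by
    rw [qpoch_succ]; ring
  have hD : qpoch (q ^ 2) (q ^ 2) (n + 1) = qpoch (q ^ 2) (q ^ 2) n * (1 - q ^ (2 * (n + 1))) := by
    rw [qpoch_succ]; ring
  have h1 := one_sub_q_pow_ne_zero (m := n + 1) (by omega)
  have h2 := one_sub_q_pow_ne_zero (m := 2 * (n + 1)) (by omega)
  rw [G14, if_neg n.succ_ne_zero, wzFactor, Nat.add_sub_cancel, hexp, zpow_add₀ q_ne_zero,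
    zpow_natCast, hP, hC, hD, show n + 1 + 2 * (m + 1) - 1 = n + 1 + 2 * m + 1 by omega]
  field_simp

theorem q_wz_pair_one (n k : ℕ) (hk : 1 ≤ k) :
    F14 n (k - 1) - F14 n k = G14 (n + 1) k - G14 n k := by
  obtain ⟨m, rfl⟩ := Nat.exists_eq_add_of_le' hk
  rw [Nat.add_sub_cancel]
  have ht : (1 - q ^ (2 * m + 1 + 2 * n)) ^ 2 ≠ 0 :=
    pow_ne_zero 2 (one_sub_q_pow_ne_zero (by omega))
  apply mul_right_cancel₀ ht
  rw [sub_mul, sub_mul, F14_mul_sq_eq_wzFactor_mul, G14_succ_mul_sq_eq_wzFactor_mul,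
    F14_succ_eq_wzFactor_mul, G14_succ_succ_eq_wzFactor_mul]
  ring
end
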